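/- arXiv:2511.10797 — 2 statements merged into one kernel-verified Lean document; each statement's English description precedes it below -/
import Mathlib

section
/- If p and q are integers with q ≠ 1 and p - q = 1, then for all n ≥ 1, Σ_{i=1}^n i·V_i = n·U_{n+1} - (q·U_n - n)/(q-1) + binom(n+1, 2). -/
def lucasU (p q : ℤ) : ℕ → ℤ
  | 0 => 0
  | 1 => 1
  | n + 2 => p * lucasU p q (n + 1) - q * lucasU p q n

def lucasV (p q : ℤ) : ℕ → ℤ
  | 0 => 2
  | 1 => p
  | n + 2 => p * lucasV p q (n + 1) - q * lucasV p q n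

lemma lucasV_closed (p q : ℤ) (h : p - q = 1) : ∀ n, lucasV p q n = q ^ n + 1
  | 0 => by simp [lucasV]
  | 1 => by simp [lucasV]; linarith
  | n + 2 => by
    have hp : p = q + 1 := by linarith
    rw [lucasV, lucasV_closed p q h (n + 1), lucasV_closed p q h n, hp]
    ring

lemma lucasU_closed (p q : ℤ) (h : p - q = 1) :
    ∀ n, (q - 1) * lucasU p q n = q ^ n - 1
  | 0 => by simp [lucasU]
  | 1 => by simp [lucasU]
  | n + 2 => by
    have hp : p = q + 1 := by linarith
    have h1 := lucasU_closed p q h (n + 1)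
    have h2 := lucasU_closed p q h n
    rw [lucasU]
    linear_combination p * h1 - q * h2 + (q * q ^ n - 1) * h

theorem stmt9 (p q : ℤ) (hq : q ≠ 1) (h : p - q = 1) (n : ℕ) (hn : 1 ≤ n) :
    (∑ i ∈ Finset.Icc 1 n, (i : ℚ) * (lucasV p q i : ℚ)) =
      (n : ℚ) * lucasU p q (n + 1) -
        ((q : ℚ) * lucasU p q n - n) / ((q : ℚ) - 1) + (n + 1).choose 2 := by
  have hq1 : (q : ℚ) - 1 ≠ 0 := by
    intro hc
    apply hq
    have : (q : ℚ) = 1 := by linarith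
    exact_mod_cast this
  have hU : ∀ m : ℕ, (lucasU p q m : ℚ) = ((q : ℚ) ^ m - 1) / ((q : ℚ) - 1) := by
    intro m
    have := lucasU_closed p q h m
    have h2 : ((q : ℚ) - 1) * (lucasU p q m : ℚ) = (q : ℚ) ^ m - 1 := by
      exact_mod_cast congrArg (Int.cast : ℤ → ℚ) this
    field_simp
    linarith
  have hV : ∀ m : ℕ, (lucasV p q m : ℚ) = (q : ℚ) ^ m + 1 := by
    intro m
    have := lucasV_closed p q h m
    exact_mod_cast congrArg (Int.cast : ℤ → ℚ) this
  induction n with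
  | zero => omega
  | succ n ih =>
    rcases Nat.eq_or_lt_of_le hn with h1 | h1
    · obtain rfl : n = 0 := by omega
      simp [hV, hU]
      field_simp
      ring
    · have hn' : 1 ≤ n := by omega
      rw [Finset.sum_Icc_succ_top (by omega : 1 ≤ n + 1), ih hn']
      rw [hV, hU, hU, hU]
      rw [Nat.cast_choose_two, Nat.cast_choose_two]
      push_cast
      field_simp
      ring
end

section
/- If p and q are integers with p - q ≠ 1, then for all n ≥ 1, Σ_{i=1}^n i·U_i = (1/(p-q-1))·(n·(U_{n+1} - q·U_n) - Ω(n)/(p-q-1)), where Ω(n) = U_{n+1} - 2q·U_n + q^2·U_{n-1} + q - 1. -/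
theorem lucasU_add_two (p q : ℤ) (n : ℕ) :
    lucasU p q (n + 2) = p * lucasU p q (n + 1) - q * lucasU p q n :=
  rfl

theorem sq_mul_sum_Icc_mul_lucasU (p q : ℤ) (n : ℕ) :
    (p - q - 1) ^ 2 * ∑ i ∈ Finset.Icc 1 (n + 1), (i : ℤ) * lucasU p q i =
      (p - q - 1) * (n + 1) * (lucasU p q (n + 2) - q * lucasU p q (n + 1)) -
        (lucasU p q (n + 2) - 2 * q * lucasU p q (n + 1) + q ^ 2 * lucasU p q n + q - 1) := by
  induction n with
  | zero =>
    simp only [zero_add, Finset.Icc_self, Finset.sum_singleton, lucasU]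
    ring
  | succ n ih =>
    rw [Finset.sum_Icc_succ_top (by omega), mul_add, ih,
      lucasU_add_two p q (n + 1), lucasU_add_two p q n]
    push_cast
    ring

theorem stmt11 (p q : ℤ) (h : p - q ≠ 1) (n : ℕ) (hn : 1 ≤ n) :
    (∑ i ∈ Finset.Icc 1 n, (i : ℚ) * (lucasU p q i : ℚ)) =
      (1 / ((p : ℚ) - q - 1)) *
        ((n : ℚ) * ((lucasU p q (n + 1) : ℚ) - q * lucasU p q n) -
          ((lucasU p q (n + 1) : ℚ) - 2 * q * lucasU p q n +
              (q : ℚ) ^ 2 * lucasU p q (n - 1) + q - 1) / ((p : ℚ) - q - 1)) := by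
  obtain ⟨m, rfl⟩ : ∃ m, n = m + 1 := ⟨n - 1, by omega⟩
  have hd : (p : ℚ) - q - 1 ≠ 0 := by
    rw [sub_ne_zero]
    exact_mod_cast h
  have hcleared := congrArg (Int.cast : ℤ → ℚ) (sq_mul_sum_Icc_mul_lucasU p q m)
  push_cast at hcleared
  rw [Nat.add_sub_cancel]
  push_cast
  field_simp
  linear_combination hcleared
end
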